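/- Fix 0 < κ < K < 1/4. Then there exist an integer n₀ and ε > 0 such that for all n ≥ n₀ and all w = 2ωn with K ≤ ω < 1/4: 2·Σ_{i+j ≤ w, i < κn} C(n,i)·C(n,j) ≤ 2^{-εn}·|B_{2n}(w)|, where B_{2n}(w) is the set of nonzero binary vectors of length 2n of weight at most w. -/

import Mathlib

open Finset
open scoped Classical

/-- The number of nonzero vectors of `F_2^N` of Hamming weight at most `v` (real radius). -/
noncomputable def ballCardR (N : ℕ) (v : ℝ) : ℕ :=
  (Finset.univ.filter (fun x : Fin N → ZMod 2 => x ≠ 0 ∧ (hammingNorm x : ℝ) ≤ v)).card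

/-!
Write `s = ⌊2ωn⌋` and `m = ⌊(K - κ)n/2⌋`. Every term `C(n,i) C(n,j)` of the sum is at most
`ρ^m C(2n,s)` for some `ρ < 1` depending only on `κ` and `K`; since there are at most `(n+1)^2`
terms and `C(2n,s) ≤ |B_{2n}(2ωn)|`, the geometric factor `ρ^m` beats the polynomial count.

If `i + j + m ≤ s`, Vandermonde gives `C(n,i) C(n,j) ≤ C(2n,i+j)`, and below `2n/3` each unit
step of the lower index at least doubles `C(2n,·)`, which yields `2^{-m} C(2n,s)`.
Otherwise `i + m ≤ (κ+K)n/2` while `j - m ≥ Kn`, so each of `m` unit moves from `j` to `i`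
multiplies `C(n,i) C(n,j)` by at least `1/ρ` (as `(κ+K)/2 < K`), and Vandermonde applies to the
shifted pair.
-/

open Filter Topology

theorem Nat.choose_mul_choose_le_add_choose (m n i j : ℕ) :
    m.choose i * n.choose j ≤ (m + n).choose (i + j) := by
  rw [Nat.add_choose_eq]
  exact single_le_sum (f := fun p : ℕ × ℕ => m.choose p.1 * n.choose p.2)
    (fun _ _ => Nat.zero_le _) (a := (i, j)) (mem_antidiagonal.2 rfl)

theorem Nat.choose_mul_two_le_choose_succ {N k : ℕ} (h : 3 * k + 2 ≤ N) :
    N.choose k * 2 ≤ N.choose (k + 1) := by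
  refine Nat.le_of_mul_le_mul_right ?_ k.succ_pos
  rw [Nat.choose_succ_right_eq, mul_assoc]
  exact Nat.mul_le_mul_left _ (by omega)

theorem Nat.choose_mul_two_pow_sub_le {N k l : ℕ} (hkl : k ≤ l) (hl : 3 * l ≤ N) :
    N.choose k * 2 ^ (l - k) ≤ N.choose l := by
  induction l, hkl using Nat.le_induction with
  | base => simp
  | succ l hkl ih =>
    rw [Nat.sub_add_comm hkl, pow_succ, ← mul_assoc]
    exact (Nat.mul_le_mul_right 2 (ih (by omega))).trans
      (Nat.choose_mul_two_le_choose_succ (by omega))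

theorem Nat.choose_mul_choose_le_half_pow_mul_choose {n i j m s : ℕ} (hs : i + j + m ≤ s)
    (h3s : 3 * s ≤ 2 * n) : (n.choose i : ℝ) * n.choose j ≤ (1 / 2) ^ m * (2 * n).choose s := by
  have hgain : (n.choose i : ℝ) * n.choose j * 2 ^ (s - (i + j)) ≤ (2 * n).choose s := by
    exact_mod_cast
      (Nat.mul_le_mul_right _ (two_mul n ▸ n.choose_mul_choose_le_add_choose n i j)).trans
        (Nat.choose_mul_two_pow_sub_le (by omega) h3s)
  calc (n.choose i : ℝ) * n.choose j
      = n.choose i * n.choose j * 2 ^ (s - (i + j)) * (1 / 2) ^ (s - (i + j)) := by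
        rw [mul_assoc _ (2 ^ _), ← mul_pow]; norm_num
    _ ≤ (2 * n).choose s * (1 / 2) ^ m :=
        mul_le_mul hgain (pow_le_pow_of_le_one (by norm_num) (by norm_num) (by omega))
          (by positivity) (by positivity)
    _ = (1 / 2) ^ m * (2 * n).choose s := mul_comm _ _

theorem Nat.choose_le_mul_choose_succ {n k : ℕ} {c : ℝ} (hk : k < n)
    (h : (k + 1 : ℝ) ≤ c * (n - k)) : (n.choose k : ℝ) ≤ c * n.choose (k + 1) := by
  have hpos : (0 : ℝ) < n - k := sub_pos.2 (by exact_mod_cast hk)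
  have hid : (n.choose (k + 1) : ℝ) * (k + 1) = n.choose k * (n - k) := by
    rw [← Nat.cast_sub hk.le]
    exact_mod_cast Nat.choose_succ_right_eq n k
  refine le_of_mul_le_mul_right ?_ hpos
  calc (n.choose k : ℝ) * (n - k) = n.choose (k + 1) * (k + 1) := hid.symm
    _ ≤ n.choose (k + 1) * (c * (n - k)) := by gcongr
    _ = c * n.choose (k + 1) * (n - k) := by ring

theorem Nat.choose_le_pow_mul_choose_add {n i t : ℕ} {a : ℝ} (ha : a < 1)
    (hit : (i + t : ℝ) ≤ a * n) : (n.choose i : ℝ) ≤ (a / (1 - a)) ^ t * n.choose (i + t) := by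
  induction t with
  | zero => simp
  | succ t ih =>
    push_cast at hit
    have ha0 : 0 < a := by
      by_contra! ha0
      nlinarith [(i.cast_nonneg : (0 : ℝ) ≤ i), (t.cast_nonneg : (0 : ℝ) ≤ t),
        (n.cast_nonneg : (0 : ℝ) ≤ n)]
    have hk : i + t < n := by
      have : ((i + t : ℕ) : ℝ) < n := by push_cast; nlinarith
      exact_mod_cast this
    have hstep : (n.choose (i + t) : ℝ) ≤ a / (1 - a) * n.choose (i + t + 1) := by
      refine Nat.choose_le_mul_choose_succ hk ?_
      rw [div_mul_eq_mul_div, le_div_iff₀ (by linarith)]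
      push_cast
      nlinarith
    calc (n.choose i : ℝ) ≤ (a / (1 - a)) ^ t * n.choose (i + t) := ih (by linarith)
      _ ≤ (a / (1 - a)) ^ t * (a / (1 - a) * n.choose (i + t + 1)) := by gcongr
      _ = (a / (1 - a)) ^ (t + 1) * n.choose (i + (t + 1)) := by rw [← add_assoc]; ring

theorem Nat.choose_le_pow_mul_choose_sub {n j t : ℕ} {b : ℝ} (hb : 0 < b) (hj : j ≤ n)
    (hjt : b * n ≤ (j - t : ℝ)) : (n.choose j : ℝ) ≤ ((1 - b) / b) ^ t * n.choose (j - t) := by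
  have htj : t ≤ j := by
    have : (t : ℝ) ≤ j := by nlinarith [(n.cast_nonneg : (0 : ℝ) ≤ n)]
    exact_mod_cast this
  have h := Nat.choose_le_pow_mul_choose_add (n := n) (i := n - j) (t := t) (a := 1 - b)
    (by linarith) (by push_cast [hj]; linarith)
  rwa [sub_sub_cancel, Nat.choose_symm hj, show n - j + t = n - (j - t) by omega,
    Nat.choose_symm (by omega)] at h

theorem Nat.choose_mul_choose_le_pow_mul_choose_shift {n i j t : ℕ} {a b : ℝ} (ha0 : 0 ≤ a)
    (ha1 : a < 1) (hb : 0 < b) (hj : j ≤ n) (hit : (i + t : ℝ) ≤ a * n)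
    (hjt : b * n ≤ (j - t : ℝ)) :
    (n.choose i : ℝ) * n.choose j ≤
      (a / (1 - a) * ((1 - b) / b)) ^ t * (n.choose (i + t) * n.choose (j - t)) := by
  have hα : 0 ≤ a / (1 - a) := div_nonneg ha0 (by linarith)
  calc (n.choose i : ℝ) * n.choose j
      ≤ (a / (1 - a)) ^ t * n.choose (i + t) * (((1 - b) / b) ^ t * n.choose (j - t)) :=
        mul_le_mul (Nat.choose_le_pow_mul_choose_add ha1 hit)
          (Nat.choose_le_pow_mul_choose_sub hb hj hjt) (by positivity) (by positivity)
    _ = _ := by rw [mul_pow]; ring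

-- `1/2` bounds `C(2n,k) / C(2n,k+1)` for `k < 2n/3`; the other factor bounds
-- `C(n,k) C(n,l) / (C(n,k+1) C(n,l-1))` for `k < (κ+K)n/2` and `l > Kn`.
noncomputable def unbalanceRatio (κ K : ℝ) : ℝ :=
  max (1 / 2) ((κ + K) / 2 / (1 - (κ + K) / 2) * ((1 - K) / K))

theorem unbalanceRatio_lt_one {κ K : ℝ} (hκK : κ < K) (hK0 : 0 < K) (hK1 : K < 1) :
    unbalanceRatio κ K < 1 := by
  refine max_lt (by norm_num) ?_
  rw [div_mul_div_comm, div_lt_one (mul_pos (by linarith) hK0)]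
  nlinarith

theorem unbalanceRatio_pos (κ K : ℝ) : 0 < unbalanceRatio κ K :=
  one_half_pos.trans_le (le_max_left _ _)

theorem choose_mul_choose_le_unbalanceRatio_pow {κ K ω : ℝ} {n i j : ℕ} (hκ : 0 < κ)
    (hκK : κ < K) (hKω : K ≤ ω) (hω : 3 * ω ≤ 1) (hij : (i + j : ℝ) ≤ 2 * ω * n)
    (hi : (i : ℝ) < κ * n) :
    (n.choose i : ℝ) * n.choose j ≤
      unbalanceRatio κ K ^ ⌊(K - κ) / 2 * n⌋₊ * (2 * n).choose ⌊2 * ω * n⌋₊ := by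
  set m := ⌊(K - κ) / 2 * n⌋₊
  set s := ⌊2 * ω * n⌋₊
  have hn : (0 : ℝ) ≤ n := n.cast_nonneg
  have hm : (m : ℝ) ≤ (K - κ) / 2 * n := Nat.floor_le (by nlinarith)
  have hs : 2 * ω * n - 1 < s := Nat.sub_one_lt_floor _
  have hijs : i + j ≤ s := Nat.le_floor (by exact_mod_cast hij)
  have h3s : 3 * s ≤ 2 * n := by
    have : (s : ℝ) ≤ 2 * ω * n := Nat.floor_le (by nlinarith)
    have : ((3 * s : ℕ) : ℝ) ≤ (2 * n : ℕ) := by push_cast; nlinarith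
    exact_mod_cast this
  rcases le_or_gt (i + j + m) s with hnear | hfar
  · calc (n.choose i : ℝ) * n.choose j ≤ (1 / 2) ^ m * (2 * n).choose s :=
          Nat.choose_mul_choose_le_half_pow_mul_choose hnear h3s
      _ ≤ unbalanceRatio κ K ^ m * (2 * n).choose s := by gcongr; exact le_max_left _ _
  · have hK : 0 < K := hκ.trans hκK
    have hKn : K * n ≤ ω * n := mul_le_mul_of_nonneg_right hKω hn
    have hfar' : (s : ℝ) + 1 ≤ i + j + m := by exact_mod_cast hfar
    have hj' : K * n ≤ (j - m : ℝ) := by linarith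
    have hmj : m ≤ j := by
      have : (m : ℝ) ≤ j := by nlinarith
      exact_mod_cast this
    have hjn : j ≤ n := by
      have : (j : ℝ) ≤ n := by nlinarith [(i.cast_nonneg : (0 : ℝ) ≤ i)]
      exact_mod_cast this
    have hshift : (n.choose (i + m) : ℝ) * n.choose (j - m) ≤ (2 * n).choose s := by
      simpa using Nat.choose_mul_choose_le_half_pow_mul_choose (m := 0) (by omega) h3s
    have hratio : 0 ≤ (κ + K) / 2 / (1 - (κ + K) / 2) * ((1 - K) / K) :=
      mul_nonneg (div_nonneg (by linarith) (by linarith)) (div_nonneg (by linarith) hK.le)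
    calc (n.choose i : ℝ) * n.choose j
        ≤ ((κ + K) / 2 / (1 - (κ + K) / 2) * ((1 - K) / K)) ^ m *
            (n.choose (i + m) * n.choose (j - m)) :=
          Nat.choose_mul_choose_le_pow_mul_choose_shift (by linarith) (by linarith)
            (by linarith) hjn (by linarith) hj'
      _ ≤ unbalanceRatio κ K ^ m * (2 * n).choose s :=
          mul_le_mul (pow_le_pow_left₀ hratio (le_max_right _ _) m) hshift (by positivity)
            (pow_nonneg (unbalanceRatio_pos κ K).le m)

theorem sum_choose_mul_choose_le_unbalanceRatio_pow {κ K ω : ℝ} {n : ℕ} (hκ : 0 < κ)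
    (hκK : κ < K) (hKω : K ≤ ω) (hω : 3 * ω ≤ 1) :
    ∑ q ∈ (Finset.range (n + 1) ×ˢ Finset.range (n + 1)).filter
        (fun q => (q.1 : ℝ) + (q.2 : ℝ) ≤ 2 * ω * n ∧ (q.1 : ℝ) < κ * n),
      ((n.choose q.1 : ℝ) * (n.choose q.2 : ℝ)) ≤
    (n + 1) ^ 2 * (unbalanceRatio κ K ^ ⌊(K - κ) / 2 * n⌋₊ * (2 * n).choose ⌊2 * ω * n⌋₊) := by
  set b := unbalanceRatio κ K ^ ⌊(K - κ) / 2 * n⌋₊ * ((2 * n).choose ⌊2 * ω * n⌋₊ : ℝ)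
  refine (sum_le_card_nsmul _ _ b fun q hq => ?_).trans ?_
  · obtain ⟨-, hq⟩ := mem_filter.1 hq
    exact choose_mul_choose_le_unbalanceRatio_pow hκ hκK hKω hω hq.1 hq.2
  · rw [nsmul_eq_mul]
    refine mul_le_mul_of_nonneg_right ?_ (mul_nonneg (pow_nonneg (unbalanceRatio_pos κ K).le _)
      (Nat.cast_nonneg _))
    rw [← Nat.cast_add_one, ← Nat.cast_pow, Nat.cast_le]
    exact (card_filter_le _ _).trans_eq (by rw [card_product, card_range, sq])

theorem exists_eventually_sq_mul_pow_floor_le {r μ : ℝ} (hr0 : 0 < r) (hr1 : r < 1)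
    (hμ : 0 < μ) :
    ∃ ε : ℝ, 0 < ε ∧
      ∀ᶠ n : ℕ in atTop, 2 * ((n : ℝ) + 1) ^ 2 * r ^ ⌊μ * n⌋₊ ≤ 2 ^ (-(ε * n)) := by
  set q := r ^ (μ / 2)
  have hq0 : 0 < q := Real.rpow_pos_of_pos hr0 _
  have hq1 : q < 1 := Real.rpow_lt_one hr0.le hr1 (by positivity)
  refine ⟨-Real.logb 2 q, neg_pos.2 (Real.logb_neg one_lt_two hq0 hq1), ?_⟩
  have hlim : Tendsto (fun n : ℕ => 2 / r * (((n + 1 : ℕ) : ℝ) ^ 2 * q ^ (n + 1)) / q)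
      atTop (𝓝 0) := by
    simpa using (((tendsto_pow_const_mul_const_pow_of_abs_lt_one 2
      (abs_lt.2 ⟨by linarith, hq1⟩)).comp (tendsto_add_atTop_nat 1)).const_mul
      (2 / r)).div_const q
  filter_upwards [hlim.eventually (ge_mem_nhds one_pos)] with n hn
  have htwo : (2 : ℝ) ^ (-(-Real.logb 2 q * n)) = q ^ n := by
    rw [neg_mul, neg_neg, Real.rpow_mul (by norm_num),
      Real.rpow_logb (by norm_num) (by norm_num) hq0, Real.rpow_natCast]
  have hpow : r ^ ⌊μ * n⌋₊ ≤ q ^ n * q ^ n / r := by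
    rw [← Real.rpow_natCast]
    calc r ^ (⌊μ * n⌋₊ : ℝ) ≤ r ^ (μ * n - 1) :=
          Real.rpow_le_rpow_of_exponent_ge hr0 hr1.le (Nat.sub_one_lt_floor _).le
      _ = q ^ n * q ^ n / r := by
          rw [Real.rpow_sub_one hr0.ne', ← pow_add, ← Real.rpow_natCast, ← Real.rpow_mul hr0.le]
          push_cast
          ring_nf
  rw [htwo]
  calc 2 * ((n : ℝ) + 1) ^ 2 * r ^ ⌊μ * n⌋₊ ≤ 2 * ((n : ℝ) + 1) ^ 2 * (q ^ n * q ^ n / r) := by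
        gcongr
    _ = 2 / r * (((n + 1 : ℕ) : ℝ) ^ 2 * q ^ (n + 1)) / q * q ^ n := by
        push_cast
        field_simp
        ring
    _ ≤ 1 * q ^ n := by gcongr
    _ = q ^ n := one_mul _

theorem choose_le_ballCardR {N k : ℕ} {v : ℝ} (hk : 1 ≤ k) (hkv : (k : ℝ) ≤ v) :
    N.choose k ≤ ballCardR N v := by
  calc N.choose k = #(powersetCard k (univ : Finset (Fin N))) := by simp
    _ ≤ ballCardR N v := by
      refine card_le_card_of_injOn (fun S i => if i ∈ S then 1 else 0) (fun S hS => ?_)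
        (fun S _ T _ hST => ?_)
      · have hnorm : hammingNorm (fun i => if i ∈ S then (1 : ZMod 2) else 0) = k := by
          rw [← (mem_powersetCard.1 hS).2, hammingNorm]
          congr 1
          ext i
          by_cases hi : i ∈ S <;> simp [hi]
        simp only [coe_filter, Set.mem_ofPred_eq, mem_univ, true_and]
        exact ⟨hammingNorm_ne_zero_iff.1 (by omega), hnorm ▸ hkv⟩
      · ext i
        have := congrFun hST i
        by_cases hiS : i ∈ S <;> by_cases hiT : i ∈ T <;> simp [hiS, hiT] at this ⊢

theorem unbalanced_terms_bound (κ K : ℝ) (h0 : 0 < κ) (h1 : κ < K) (h2 : K < 1 / 4) :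
    ∃ n₀ : ℕ, ∃ ε : ℝ, 0 < ε ∧
      ∀ n : ℕ, n₀ ≤ n → ∀ ω : ℝ, K ≤ ω → ω < 1 / 4 →
        2 * ∑ q ∈ (Finset.range (n + 1) ×ˢ Finset.range (n + 1)).filter
              (fun q => (q.1 : ℝ) + (q.2 : ℝ) ≤ 2 * ω * n ∧ (q.1 : ℝ) < κ * n),
            ((n.choose q.1 : ℝ) * (n.choose q.2 : ℝ)) ≤
          (2 : ℝ) ^ (-(ε * n)) * (ballCardR (2 * n) (2 * ω * n) : ℝ) := by
  have hK : 0 < K := h0.trans h1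
  obtain ⟨ε, hε, hdecay⟩ := exists_eventually_sq_mul_pow_floor_le (unbalanceRatio_pos κ K)
    (unbalanceRatio_lt_one h1 hK (by linarith)) (by linarith : 0 < (K - κ) / 2)
  have hlarge : ∀ᶠ n : ℕ in atTop, 1 ≤ 2 * K * n :=
    (tendsto_natCast_atTop_atTop.const_mul_atTop (by positivity)).eventually_ge_atTop 1
  obtain ⟨n₀, hn₀⟩ := eventually_atTop.1 (hdecay.and hlarge)
  refine ⟨n₀, ε, hε, fun n hn ω hKω hω => ?_⟩
  obtain ⟨hdecay_n, hlarge_n⟩ := hn₀ n hn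
  have hω0 : 0 < ω := hK.trans_le hKω
  have hball : ((2 * n).choose ⌊2 * ω * n⌋₊ : ℝ) ≤ ballCardR (2 * n) (2 * ω * n) := by
    refine Nat.cast_le.2 (choose_le_ballCardR (Nat.le_floor ?_) (Nat.floor_le (by positivity)))
    push_cast
    nlinarith
  calc _ ≤ 2 * ((n + 1) ^ 2 *
        (unbalanceRatio κ K ^ ⌊(K - κ) / 2 * n⌋₊ * (2 * n).choose ⌊2 * ω * n⌋₊)) := by
        gcongr
        exact sum_choose_mul_choose_le_unbalanceRatio_pow h0 h1 hKω (by linarith)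
    _ = 2 * ((n : ℝ) + 1) ^ 2 * unbalanceRatio κ K ^ ⌊(K - κ) / 2 * n⌋₊ *
          (2 * n).choose ⌊2 * ω * n⌋₊ := by ring
    _ ≤ (2 : ℝ) ^ (-(ε * n)) * (ballCardR (2 * n) (2 * ω * n) : ℝ) := by gcongr
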